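/- For every μ with 1/2 < μ ≤ 1, the commuter h_μ is strictly increasing on [0,1]; that is, x < y implies h_μ(x) < h_μ(y) for all x, y ∈ [0,1]. -/

import Mathlib

/-!
Since `2μ > 1`, both branches of the functional equation expand distances by the factor `2μ`,
so after finitely many steps any gap `y - x > 0` exceeds `1/2` and the pair straddles `1/2`.
For `x ≤ 1/2 < y` the equation gives `h x ≤ 1/2 ≤ h y`, and strictness comes from
`0 < h < 1` on `(0,1)`, which is proved by the same expansion argument.
-/

open Set

/-- `h : [0,1] → [0,1]` satisfies the commuter functional equation for `T_μ`:
`h(x) = (1/2)·h(2μx)` for `0 ≤ x ≤ 1/2` and `h(x) = 1 - (1/2)·h(2μ(1-x))` for `1/2 < x ≤ 1`. -/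
def IsCommuter (μ : ℝ) (h : ℝ → ℝ) : Prop :=
  (∀ x ∈ Icc (0:ℝ) 1, h x ∈ Icc (0:ℝ) 1) ∧
  (∀ x : ℝ, 0 ≤ x → x ≤ 1/2 → h x = (1/2) * h (2*μ*x)) ∧
  (∀ x : ℝ, 1/2 < x → x ≤ 1 → h x = 1 - (1/2) * h (2*μ*(1-x)))

theorem forall_pos_of_expanding {c : ℝ} (hc : 1 < c) (a : ℝ) {P : ℝ → Prop}
    (hbase : ∀ d, a < d → P d) (hstep : ∀ d, 0 < d → d ≤ a → P (c * d) → P d) :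
    ∀ d, 0 < d → P d := by
  suffices key : ∀ n : ℕ, ∀ d, 0 < d → a < c ^ n * d → P d by
    intro d hd
    obtain ⟨n, hn⟩ := pow_unbounded_of_one_lt (a / d) hc
    exact key n d hd ((div_lt_iff₀ hd).1 hn)
  intro n
  induction n with
  | zero => intro d _ hd; exact hbase d (by simpa using hd)
  | succ n ih =>
    intro d hd hlt
    rcases lt_or_ge a d with had | hda
    · exact hbase d had
    · refine hstep d hd hda (ih _ (by positivity) ?_)
      rwa [← mul_assoc, ← pow_succ]

namespace IsCommuter

variable {μ : ℝ} {h : ℝ → ℝ}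

theorem le_half (hc : IsCommuter μ h) (hμ₀ : 0 ≤ μ) (hμ₁ : μ ≤ 1) {x : ℝ}
    (hx₀ : 0 ≤ x) (hx : x ≤ 1/2) : h x ≤ 1/2 := by
  have hmem := hc.1 (2*μ*x) ⟨by positivity, by nlinarith⟩
  rw [hc.2.1 x hx₀ hx]
  linarith [hmem.2]

theorem half_le (hc : IsCommuter μ h) (hμ₀ : 0 ≤ μ) (hμ₁ : μ ≤ 1) {x : ℝ}
    (hx : 1/2 < x) (hx₁ : x ≤ 1) : 1/2 ≤ h x := by
  have hmem := hc.1 (2*μ*(1-x)) ⟨by nlinarith, by nlinarith⟩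
  rw [hc.2.2 x hx hx₁]
  linarith [hmem.2]

theorem pos (hc : IsCommuter μ h) (hμ₀ : 1/2 < μ) (hμ₁ : μ ≤ 1) {x : ℝ}
    (hx₀ : 0 < x) (hx₁ : x ≤ 1) : 0 < h x := by
  refine forall_pos_of_expanding (c := 2*μ) (by linarith) (1/2)
    (P := fun x => x ≤ 1 → 0 < h x) ?_ ?_ x hx₀ hx₁
  · intro x hx hx₁
    linarith [hc.half_le (by linarith) hμ₁ hx hx₁]
  · intro x hx₀ hx ih _
    rw [hc.2.1 x hx₀.le hx]
    linarith [ih (by nlinarith)]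

theorem lt_one (hc : IsCommuter μ h) (hμ₀ : 1/2 < μ) (hμ₁ : μ ≤ 1) {x : ℝ}
    (hx₀ : 0 ≤ x) (hx₁ : x < 1) : h x < 1 := by
  rcases le_or_gt x (1/2) with hx | hx
  · linarith [hc.le_half (by linarith) hμ₁ hx₀ hx]
  · rw [hc.2.2 x hx hx₁.le]
    linarith [hc.pos hμ₀ hμ₁ (x := 2*μ*(1-x)) (by nlinarith) (by nlinarith)]

theorem lt_of_le_half_of_half_lt (hc : IsCommuter μ h) (hμ₀ : 1/2 < μ) (hμ₁ : μ ≤ 1)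
    {x y : ℝ} (hx₀ : 0 ≤ x) (hx : x ≤ 1/2) (hy : 1/2 < y) (hy₁ : y ≤ 1) : h x < h y := by
  have hfar : h (2*μ*(1-y)) < 1 := hc.lt_one hμ₀ hμ₁ (by nlinarith) (by nlinarith)
  have hnear : h (2*μ*x) ≤ 1 := (hc.1 _ ⟨by positivity, by nlinarith⟩).2
  rw [hc.2.1 x hx₀ hx, hc.2.2 y hy hy₁]
  linarith

end IsCommuter

theorem commuter_strictMonoOn (μ : ℝ) (hμ1 : 1/2 < μ) (hμ2 : μ ≤ 1)
    (h : ℝ → ℝ) (hc : IsCommuter μ h) :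
    StrictMonoOn h (Icc (0:ℝ) 1) := by
  have gap : ∀ d, 0 < d → ∀ x y, 0 ≤ x → y ≤ 1 → y - x = d → h x < h y := by
    refine forall_pos_of_expanding (c := 2*μ) (by linarith) (1/2) ?_ ?_
    · intro d hd x y hx₀ hy₁ hxy
      exact hc.lt_of_le_half_of_half_lt hμ1 hμ2 hx₀ (by linarith) (by linarith) hy₁
    · intro d hd _ ih x y hx₀ hy₁ hxy
      rcases le_or_gt y (1/2) with hy | hy
      · rw [hc.2.1 x hx₀ (by linarith), hc.2.1 y (by linarith) hy]
        linarith [ih (2*μ*x) (2*μ*y) (by positivity) (by nlinarith) (by rw [← hxy]; ring)]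
      rcases le_or_gt x (1/2) with hx | hx
      · exact hc.lt_of_le_half_of_half_lt hμ1 hμ2 hx₀ hx hy hy₁
      · rw [hc.2.2 x hx (by linarith), hc.2.2 y hy hy₁]
        linarith [ih (2*μ*(1-y)) (2*μ*(1-x)) (by nlinarith) (by nlinarith)
          (by rw [← hxy]; ring)]
  intro x hx y hy hxy
  exact gap (y - x) (by linarith) x y hx.1 hy.2 rfl
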